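/- arXiv:1108.4869 — 2 statements merged into one kernel-verified Lean document; each statement's English description precedes it below -/
import Mathlib

section
/- Let n ≥ 2 and let c_1, …, c_n be integers with c_i ≥ 1 for all i and c_n ≥ 2. Let D be the finite sequence of integers obtained by concatenating blocks B_1, …, B_n, where B_1 = (c_1 + 1), for even i with i < n the block B_i consists of c_i − 1 copies of 2, for odd i with 1 < i < n the block B_i = (c_i + 2), and the final block B_n = (c_n + 1) if n is odd, while B_n consists of c_n − 1 copies of 2 if n is even. Then [c_1, …, c_n]^+ = [D]^-. -/
/-!
Under `z ↦ (z - 1)⁻¹` the step `z ↦ 2 - 1/z` of a negative continued fraction becomes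
`t ↦ t + 1`, so a run of `k` twos adds `k`. Hence if `[E]⁻ = y + 1` with `y = [c₃, …]⁺`, then
`w = [2, …, 2, E]⁻` (with `b - 1` twos) has `(1 - 1/w)⁻¹ = 1 + (w - 1)⁻¹ = b + 1/y = [b, c₃, …]⁺`,
and so `[a + 2, 2, …, 2, E]⁻ = a + 1 + (1 - 1/w) = [a, b, c₃, …]⁺ + 1`. Inducting two coefficients
at a time, `[D']⁻ = [c]⁺ + 1` where `D'` is `D` with head `c₁ + 2`, and lowering the head by one
subtracts one.
-/

/-- Positive continued fraction `[c₁, …, cₙ]⁺ = c₁ + 1/[c₂, …, cₙ]⁺` of a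
finite sequence of rationals (junk value `0` on the empty list). -/
def posCF : List ℚ → ℚ
  | [] => 0
  | [c] => c
  | c :: d :: t => c + 1 / posCF (d :: t)

/-- Negative continued fraction `[c₁, …, cₙ]⁻ = c₁ - 1/[c₂, …, cₙ]⁻` of a
finite sequence of rationals (junk value `0` on the empty list). -/
def negCF : List ℚ → ℚ
  | [] => 0
  | [c] => c
  | c :: d :: t => c - 1 / negCF (d :: t)

theorem posCF_cons {l : List ℚ} (hl : l ≠ []) (a : ℚ) : posCF (a :: l) = a + 1 / posCF l := by
  obtain ⟨b, t, rfl⟩ := List.exists_cons_of_ne_nil hl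
  rfl

theorem negCF_cons {l : List ℚ} (hl : l ≠ []) (a : ℚ) : negCF (a :: l) = a - 1 / negCF l := by
  obtain ⟨b, t, rfl⟩ := List.exists_cons_of_ne_nil hl
  rfl

theorem negCF_cons_add (a d : ℚ) (l : List ℚ) : negCF ((a + d) :: l) = negCF (a :: l) + d := by
  rcases eq_or_ne l [] with rfl | hl
  · rfl
  · rw [negCF_cons hl, negCF_cons hl]
    ring

theorem one_le_posCF {l : List ℚ} (hl : l ≠ []) (h : ∀ x ∈ l, 1 ≤ x) : 1 ≤ posCF l := by
  induction l with
  | nil => exact absurd rfl hl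
  | cons a t ih =>
    rcases eq_or_ne t [] with rfl | ht
    · exact h a List.mem_cons_self
    · have hpos : 0 < posCF t := by linarith [ih ht fun x hx => h x (List.mem_cons_of_mem a hx)]
      rw [posCF_cons ht]
      linarith [h a List.mem_cons_self, one_div_pos.mpr hpos]

theorem inv_one_sub_one_div {z : ℚ} (hz : 1 < z) : (1 - 1 / z)⁻¹ = 1 + (z - 1)⁻¹ := by
  have hz0 : z ≠ 0 := by positivity
  have hz1 : z - 1 ≠ 0 := sub_ne_zero.mpr hz.ne'
  rw [show 1 - 1 / z = (z - 1) / z by field_simp, inv_div]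
  field_simp
  ring

theorem negCF_replicate_two_append {l : List ℚ} (hl : l ≠ []) (h : 1 < negCF l) (k : ℕ) :
    1 < negCF (List.replicate k 2 ++ l) ∧
      (negCF (List.replicate k 2 ++ l) - 1)⁻¹ = k + (negCF l - 1)⁻¹ := by
  induction k with
  | zero => simpa using h
  | succ k ih =>
    obtain ⟨hw, heq⟩ := ih
    have hne : List.replicate k (2 : ℚ) ++ l ≠ [] := by simp [hl]
    have hinv : 1 / negCF (List.replicate k 2 ++ l) < 1 := (div_lt_one (by positivity)).mpr hw
    rw [List.replicate_succ, List.cons_append, negCF_cons hne]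
    refine ⟨by linarith, ?_⟩
    rw [show 2 - 1 / negCF (List.replicate k 2 ++ l) - 1 =
      1 - 1 / negCF (List.replicate k 2 ++ l) by ring, inv_one_sub_one_div hw, heq]
    push_cast
    ring

theorem negCF_replicate_two {k : ℕ} (hk : 1 ≤ k) :
    1 < negCF (List.replicate k (2 : ℚ)) ∧ (negCF (List.replicate k (2 : ℚ)) - 1)⁻¹ = k := by
  obtain ⟨k, rfl⟩ := Nat.exists_eq_add_of_le' hk
  have h := negCF_replicate_two_append (l := [(2 : ℚ)]) (by simp) (by norm_num [negCF]) k
  rw [← List.replicate_succ'] at h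
  norm_num [negCF] at h ⊢
  exact h

/-- The paper's sequence `D` for the coefficients `c`, except that its head is `c₁ + 2` rather
than `c₁ + 1`, which makes the recursion uniform. -/
def posToNegCoeffs : List ℤ → List ℤ
  | [] => []
  | [a] => [a + 1]
  | a :: b :: t => (a + 2) :: (List.replicate (b - 1).toNat 2 ++ posToNegCoeffs t)

theorem posToNegCoeffs_ne_nil {l : List ℤ} (hl : l ≠ []) : posToNegCoeffs l ≠ [] := by
  match l, hl with
  | [_], _ => simp [posToNegCoeffs]
  | _ :: _ :: _, _ => simp [posToNegCoeffs]

theorem negCF_posToNegCoeffs {l : List ℤ} (hl : l ≠ []) (hone : ∀ x ∈ l, 1 ≤ x)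
    (htwo : 2 ≤ l.getLast hl) :
    negCF ((posToNegCoeffs l).map (↑)) = posCF (l.map (↑)) + 1 := by
  induction l using posToNegCoeffs.induct with
  | case1 => exact absurd rfl hl
  | case2 a => simp [posToNegCoeffs, negCF, posCF]
  | case3 a b t ih =>
    have hb : (((b - 1).toNat : ℕ) : ℚ) = b - 1 := by
      have := hone b (by simp)
      exact_mod_cast Int.toNat_of_nonneg (by omega)
    set R := List.replicate (b - 1).toNat (2 : ℚ) ++ (posToNegCoeffs t).map (↑) with hR
    obtain ⟨hW, hP⟩ : 1 < negCF R ∧ 1 + (negCF R - 1)⁻¹ = posCF ((b :: t).map (↑)) := by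
      rcases eq_or_ne t [] with rfl | ht
      · have hb2 : 2 ≤ b := htwo
        obtain ⟨hlt, heq⟩ := negCF_replicate_two (k := (b - 1).toNat) (by omega)
        simp only [hR, posToNegCoeffs, List.map_nil, List.append_nil]
        exact ⟨hlt, by rw [heq, hb]; simp [posCF]⟩
      · have hy : 1 ≤ posCF (t.map (↑)) := one_le_posCF (by simpa using ht) fun x hx => by
          obtain ⟨y, hy, rfl⟩ := List.mem_map.mp hx
          exact_mod_cast hone y (by simp [hy])
        have ih' := ih ht (fun x hx => hone x (List.mem_cons_of_mem _ (List.mem_cons_of_mem _ hx)))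
          (by simpa [List.getLast_cons ht] using htwo)
        obtain ⟨hlt, heq⟩ := negCF_replicate_two_append (l := (posToNegCoeffs t).map (↑))
          (by simpa using posToNegCoeffs_ne_nil ht) (by linarith) (b - 1).toNat
        refine ⟨hlt, ?_⟩
        rw [heq, ih', hb, List.map_cons, posCF_cons (by simpa using ht)]
        ring
    have hRne : R ≠ [] := fun h => by norm_num [h, negCF] at hW
    have hmap : (posToNegCoeffs (a :: b :: t)).map (↑) = ((a : ℚ) + 2) :: R := by
      simp [posToNegCoeffs, hR]
    rw [hmap, negCF_cons hRne, List.map_cons, posCF_cons (by simp), ← hP,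
      ← inv_one_sub_one_div hW, one_div (1 - _)⁻¹, inv_inv]
    ring

/-- The paper's block `B_{j+1}`, except that `B₁` becomes `(c₁ + 2)` as in `posToNegCoeffs`. -/
def posToNegBlock (n : ℕ) (c : ℕ → ℤ) (j : ℕ) : List ℤ :=
  if j % 2 = 1 then List.replicate (c j - 1).toNat 2
  else if j = n - 1 then [c j + 1] else [c j + 2]

theorem posToNegCoeffs_map_range :
    ∀ (n : ℕ) (c : ℕ → ℤ),
      posToNegCoeffs ((List.range n).map c) = (List.range n).flatMap (posToNegBlock n c)
  | 0, _ => rfl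
  | 1, _ => by simp [posToNegCoeffs, posToNegBlock]
  | n + 2, c => by
    have hshift : ∀ j ∈ List.range n,
        posToNegBlock (n + 2) c (j + 2) = posToNegBlock n (fun i => c (i + 2)) j := by
      intro j hj
      have := List.mem_range.mp hj
      simp only [posToNegBlock, Nat.add_mod_right]
      split_ifs <;> first | rfl | omega
    simp only [List.range_succ_eq_map, List.map_cons, List.map_map, List.flatMap_cons,
      List.flatMap_map, Function.comp_def, Nat.succ_eq_add_one, Nat.add_assoc, Nat.reduceAdd]
    rw [List.flatMap_congr hshift, ← posToNegCoeffs_map_range n]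
    simp [posToNegCoeffs, posToNegBlock]

theorem negCF_flatMap_ite_zero_posToNegBlock {n : ℕ} (hn : 2 ≤ n) (c : ℕ → ℤ) :
    negCF (((List.range n).flatMap fun j => if j = 0 then [c 0 + 1] else posToNegBlock n c j).map
        (↑)) =
      negCF (((List.range n).flatMap (posToNegBlock n c)).map (↑)) - 1 := by
  obtain ⟨m, rfl⟩ : ∃ m, n = m + 1 := ⟨n - 1, by omega⟩
  have h0 : posToNegBlock (m + 1) c 0 = [c 0 + 2] := by
    rw [posToNegBlock, if_neg (by norm_num), if_neg (by omega)]
  simp only [List.range_succ_eq_map, List.flatMap_cons, List.flatMap_map, h0, if_pos,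
    Nat.succ_ne_zero, if_false, List.cons_append, List.nil_append, List.map_cons]
  rw [sub_eq_add_neg, ← negCF_cons_add]
  congr 2
  push_cast
  ring

/-- `[c₁, …, cₙ]⁺ = [c₁+1, 2…2 (c₂-1 copies), c₃+2, 2…2 (c₄-1 copies), c₅+2, …]⁻`,
ending with `cₙ+1` if `n` is odd and with `cₙ-1` copies of `2` if `n` is even.
(Here the sequence is indexed by `0, …, n-1`, so the paper's `cᵢ` is `c (i-1)`.) -/
theorem stmt1 (n : ℕ) (hn : 2 ≤ n) (c : ℕ → ℤ)
    (hc : ∀ i < n, 1 ≤ c i) (hclast : 2 ≤ c (n - 1)) :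
    posCF ((List.range n).map fun i => (c i : ℚ)) =
      negCF (((List.range n).flatMap fun j =>
          if j = 0 then [c 0 + 1]
          else if j = n - 1 then
            (if n % 2 = 1 then [c j + 1] else List.replicate (c j - 1).toNat 2)
          else if j % 2 = 1 then List.replicate (c j - 1).toNat 2
          else [c j + 2]).map fun t => (t : ℚ)) := by
  -- the coercion `List ℤ → List ℚ` in the statement elaborates as a monadic bind
  simp only [List.pure_def, List.bind_eq_flatMap, ← List.map_eq_flatMap, List.map_map,
    Function.comp_def]
  rw [List.flatMap_congr (g := fun j => if j = 0 then [c 0 + 1] else posToNegBlock n c j)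
      fun j hj => by
        have := List.mem_range.mp hj
        simp only [posToNegBlock]
        split_ifs <;> first | rfl | omega,
    negCF_flatMap_ite_zero_posToNegBlock hn, ← posToNegCoeffs_map_range,
    negCF_posToNegCoeffs (by simp; omega) (by simpa using hc)
      (by simpa [List.getLast_map, List.getLast_range] using hclast)]
  simp [Function.comp_def]
end

section
/- Let n ≥ 1 and let a_1, …, a_n be integers with a_1 ≥ 1, |a_i| ≥ 2 for 1 < i < n, and, if n ≥ 2, either |a_n| ≥ 2 or a_n = −1. Let A = A(a_1, …, a_n) be the symmetric tridiagonal n×n matrix with A_{i,i} = a_i and A_{i,i±1} = 1. Then A is nondegenerate and its signature equals #{i : a_i > 0} − #{i : a_i < 0}. -/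
/-!
The pivots `r₀ = a₀`, `rₖ = aₖ - 1 / rₖ₋₁` of Gaussian elimination on the tridiagonal `A` give
`xᵀ A x = ∑ rₖ (xₖ + xₖ₊₁ / rₖ)²`, a diagonalisation of the quadratic form of `A` by a unit upper
bidiagonal change of variables. By Sylvester's law of inertia, `A` then has as many positive
(negative) eigenvalues as there are positive (negative) pivots. The hypotheses on the `aᵢ` keep
every pivot but the last in `[1, ∞) ∪ (-∞, -1)`, so that `1 / rₖ ∈ (-1, 1]` and every pivot has the
sign of the corresponding `aₖ`; in particular no pivot vanishes and `A` is nondegenerate.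
-/

/-- The signature of a Hermitian (real symmetric) matrix: the number of positive
eigenvalues minus the number of negative eigenvalues, counted with multiplicity
(junk value `0` for non-Hermitian matrices). -/
noncomputable def matSig {n : ℕ} (A : Matrix (Fin n) (Fin n) ℝ) : ℤ :=
  if hA : A.IsHermitian then
    ((Finset.univ.filter fun i => 0 < hA.eigenvalues i).card : ℤ) -
    ((Finset.univ.filter fun i => hA.eigenvalues i < 0).card : ℤ)
  else 0

/-- The symmetric tridiagonal `n × n` real matrix with diagonal entries
`a 0, …, a (n-1)` and off-diagonal entries `1`. -/
def triMat (n : ℕ) (a : ℕ → ℤ) : Matrix (Fin n) (Fin n) ℝ :=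
  Matrix.of fun i j : Fin n =>
    if (i : ℕ) = j then (a i : ℝ)
    else if (i : ℕ) + 1 = j ∨ (j : ℕ) + 1 = i then 1 else 0

open Finset Matrix

section Inertia

variable {ι κ : Type*} [Fintype ι] [Fintype κ]

/-- Sylvester's law of inertia, one inequality: the form `∑ eₖ xₖ²` is positive definite on the
coordinates where `e > 0`, and that subspace meets the preimage of the coordinates where `d ≤ 0`
only in `0`. -/
lemma card_pos_le_of_sum_sq_eq (d : ι → ℝ) (e : κ → ℝ) (f : (κ → ℝ) →ₗ[ℝ] (ι → ℝ))
    (h : ∀ x, ∑ k, e k * x k ^ 2 = ∑ i, d i * f x i ^ 2) :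
    #{k | 0 < e k} ≤ #{i | 0 < d i} := by
  let emb := Function.ExtendByZero.linearMap ℝ (Subtype.val : {k // 0 < e k} → κ)
  let res := LinearMap.funLeft ℝ ℝ (Subtype.val : {i // 0 < d i} → ι)
  have hext (y) (k : {k // 0 < e k}) : emb y k = y k := Subtype.val_injective.extend_apply _ _ _
  suffices Function.Injective (res ∘ₗ f ∘ₗ emb) by
    simpa [Module.finrank_fintype_fun_eq_card, Fintype.card_subtype] using
      LinearMap.finrank_le_finrank_of_injective this
  rw [← LinearMap.ker_eq_bot, LinearMap.ker_eq_bot']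
  intro y hy
  by_contra hy0
  obtain ⟨k, hk⟩ := Function.ne_iff.mp hy0
  have hpos : 0 < ∑ k, e k * emb y k ^ 2 := by
    refine sum_pos' (fun k _ => ?_) ⟨k, mem_univ _, ?_⟩
    · by_cases hk : 0 < e k
      · exact mul_nonneg hk.le (sq_nonneg _)
      · rw [Function.ExtendByZero.linearMap_apply, Function.extend_apply' _ _ _ (by simpa using hk)]
        simp
    · rw [hext]
      exact mul_pos k.2 (pow_two_pos_of_ne_zero hk)
  have hnonpos : ∑ i, d i * f (emb y) i ^ 2 ≤ 0 := by
    refine sum_nonpos fun i _ => ?_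
    by_cases hi : 0 < d i
    · simp [show f (emb y) i = 0 from congrFun hy ⟨i, hi⟩]
    · exact mul_nonpos_of_nonpos_of_nonneg (not_lt.mp hi) (sq_nonneg _)
  linarith [h (emb y)]

lemma card_pos_eq_of_sum_sq_eq (d : ι → ℝ) (e : κ → ℝ) (f : (κ → ℝ) ≃ₗ[ℝ] (ι → ℝ))
    (h : ∀ x, ∑ k, e k * x k ^ 2 = ∑ i, d i * f x i ^ 2) :
    #{k | 0 < e k} = #{i | 0 < d i} :=
  (card_pos_le_of_sum_sq_eq d e f h).antisymm <|
    card_pos_le_of_sum_sq_eq e d f.symm fun y => by simpa using (h (f.symm y)).symm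

lemma card_neg_eq_of_sum_sq_eq (d : ι → ℝ) (e : κ → ℝ) (f : (κ → ℝ) ≃ₗ[ℝ] (ι → ℝ))
    (h : ∀ x, ∑ k, e k * x k ^ 2 = ∑ i, d i * f x i ^ 2) :
    #{k | e k < 0} = #{i | d i < 0} := by
  simpa using card_pos_eq_of_sum_sq_eq (-d) (-e) f fun x => by simp [h]

lemma card_pos_add_card_neg (v : ι → ℝ) :
    #{i | 0 < v i} + #{i | v i < 0} = #{i | v i ≠ 0} := by
  classical
  rw [← card_union_of_disjoint (disjoint_filter.2 fun i _ h => h.asymm), ← filter_or]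
  simp_rw [ne_iff_lt_or_gt, or_comm]

lemma ne_zero_of_sum_sq_eq (d e : ι → ℝ) (f : (ι → ℝ) ≃ₗ[ℝ] (ι → ℝ))
    (h : ∀ x, ∑ k, e k * x k ^ 2 = ∑ i, d i * f x i ^ 2) (hd : ∀ i, d i ≠ 0) (k : ι) :
    e k ≠ 0 := by
  have hcard : #{k | e k ≠ 0} = #{i | d i ≠ 0} := by
    rw [← card_pos_add_card_neg, ← card_pos_add_card_neg, card_pos_eq_of_sum_sq_eq d e f h,
      card_neg_eq_of_sum_sq_eq d e f h]
  rw [filter_true_of_mem fun i _ => hd i] at hcard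
  exact card_filter_eq_iff.1 hcard k (mem_univ k)

lemma Matrix.IsHermitian.sum_eigenvalues_mul_sq [DecidableEq ι] {A : Matrix ι ι ℝ}
    (hA : A.IsHermitian) (x : ι → ℝ) :
    ∑ i, hA.eigenvalues i * x i ^ 2 =
      (hA.eigenvectorUnitary *ᵥ x) ⬝ᵥ A *ᵥ (hA.eigenvectorUnitary *ᵥ x) := by
  have hdiag := hA.conjStarAlgAut_star_eigenvectorUnitary
  rw [Unitary.conjStarAlgAut_apply, Unitary.coe_star, star_star] at hdiag
  calc ∑ i, hA.eigenvalues i * x i ^ 2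
      = x ⬝ᵥ diagonal (RCLike.ofReal ∘ hA.eigenvalues) *ᵥ x := by
        simp [dotProduct, mulVec_diagonal, sq, mul_left_comm]
    _ = _ := by
        rw [← hdiag, ← mulVec_mulVec, ← mulVec_mulVec, dotProduct_mulVec, star_eq_conjTranspose,
          conjTranspose_eq_transpose_of_trivial, vecMul_transpose]

variable [DecidableEq ι] {A : Matrix ι ι ℝ} (d : ι → ℝ) (f : (ι → ℝ) ≃ₗ[ℝ] (ι → ℝ))

lemma Matrix.IsHermitian.sum_eigenvalues_mul_sq_eq (hA : A.IsHermitian)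
    (h : ∀ y, y ⬝ᵥ A *ᵥ y = ∑ i, d i * f y i ^ 2) (x : ι → ℝ) :
    ∑ i, hA.eigenvalues i * x i ^ 2 =
      ∑ i, d i * ((UnitaryGroup.toLinearEquiv hA.eigenvectorUnitary).trans f) x i ^ 2 := by
  rw [hA.sum_eigenvalues_mul_sq, h]
  rfl

lemma Matrix.IsHermitian.card_pos_eigenvalues_eq (hA : A.IsHermitian)
    (h : ∀ y, y ⬝ᵥ A *ᵥ y = ∑ i, d i * f y i ^ 2) :
    #{i | 0 < hA.eigenvalues i} = #{i | 0 < d i} :=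
  card_pos_eq_of_sum_sq_eq _ _ _ (hA.sum_eigenvalues_mul_sq_eq d f h)

lemma Matrix.IsHermitian.card_neg_eigenvalues_eq (hA : A.IsHermitian)
    (h : ∀ y, y ⬝ᵥ A *ᵥ y = ∑ i, d i * f y i ^ 2) :
    #{i | hA.eigenvalues i < 0} = #{i | d i < 0} :=
  card_neg_eq_of_sum_sq_eq _ _ _ (hA.sum_eigenvalues_mul_sq_eq d f h)

lemma Matrix.IsHermitian.det_ne_zero_of_sum_sq_eq (hA : A.IsHermitian)
    (h : ∀ y, y ⬝ᵥ A *ᵥ y = ∑ i, d i * f y i ^ 2) (hd : ∀ i, d i ≠ 0) : A.det ≠ 0 := by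
  rw [hA.det_eq_prod_eigenvalues, prod_ne_zero_iff]
  exact fun i _ => by
    simpa using ne_zero_of_sum_sq_eq _ _ _ (hA.sum_eigenvalues_mul_sq_eq d f h) hd i

end Inertia

section Bidiagonal

variable {R : Type*} [CommRing R] {n : ℕ}

noncomputable def zeroExtend (n : ℕ) : (Fin n → R) →ₗ[R] ℕ → R :=
  Function.ExtendByZero.linearMap R Fin.val

@[simp]
lemma zeroExtend_val (y : Fin n → R) (i : Fin n) : zeroExtend n y i = y i :=
  Fin.val_injective.extend_apply _ _ _

lemma zeroExtend_of_le (y : Fin n → R) {k : ℕ} (hk : n ≤ k) : zeroExtend n y k = 0 :=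
  Function.extend_apply' _ _ _ fun ⟨i, hi⟩ => by omega

noncomputable def bidiagMap (n : ℕ) (c : ℕ → R) : (Fin n → R) →ₗ[R] (Fin n → R) where
  toFun y i := y i + c i * zeroExtend n y (i + 1)
  map_add' y z := by ext i; simp only [map_add, Pi.add_apply]; ring
  map_smul' r y := by
    ext i
    simp only [map_smul, Pi.smul_apply, smul_eq_mul, RingHom.id_apply]
    ring

lemma bidiagMap_injective (c : ℕ → R) : Function.Injective (bidiagMap n c) := by
  rw [← LinearMap.ker_eq_bot, LinearMap.ker_eq_bot']
  intro y hy
  suffices ∀ m k, n ≤ k + m → zeroExtend n y k = 0 from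
    funext fun i => by simpa using this n i (by omega)
  intro m
  induction m with
  | zero => exact fun k hk => zeroExtend_of_le y (by omega)
  | succ m ih =>
    intro k hk
    by_cases hkn : k < n
    · have := congrFun hy ⟨k, hkn⟩
      simp only [bidiagMap, LinearMap.coe_mk, AddHom.coe_mk, Pi.zero_apply,
        ih (k + 1) (by omega), mul_zero, add_zero] at this
      rw [show k = ((⟨k, hkn⟩ : Fin n) : ℕ) from rfl, zeroExtend_val]
      simpa using this
    · exact zeroExtend_of_le y (by omega)

end Bidiagonal

section Pivots

noncomputable def pivot {K : Type*} [DivisionRing K] (a : ℕ → K) : ℕ → K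
  | 0 => a 0
  | k + 1 => a (k + 1) - (pivot a k)⁻¹

lemma sum_range_pivot_mul_sq {K : Type*} [Field K] (a x : ℕ → K) (n : ℕ)
    (h : ∀ k ≤ n, pivot a k ≠ 0) :
    ∑ k ∈ range (n + 1), pivot a k * (x k + (pivot a k)⁻¹ * x (k + 1)) ^ 2 =
      ∑ k ∈ range (n + 1), (a k * x k ^ 2 + 2 * x k * x (k + 1)) + x (n + 1) ^ 2 / pivot a n := by
  induction n with
  | zero =>
    have h0 := h 0 le_rfl
    simp only [zero_add, sum_range_one, pivot] at h0 ⊢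
    field_simp
    ring
  | succ n ih =>
    have hn := h n (by omega)
    have hn1 := h (n + 1) le_rfl
    have ha : a (n + 1) = pivot a (n + 1) + (pivot a n)⁻¹ := by rw [pivot]; ring
    rw [sum_range_succ _ (n + 1), ih fun k hk => h k (by omega), sum_range_succ _ (n + 1), ha]
    field_simp
    ring

lemma inv_mem_Ioc_of_one_le_or_lt_neg_one {r : ℝ} (h : 1 ≤ r ∨ r < -1) :
    r⁻¹ ∈ Set.Ioc (-1) 1 := by
  rcases h with h | h
  · exact ⟨by linarith [inv_pos.2 (zero_lt_one.trans_le h)], inv_le_one_of_one_le₀ h⟩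
  · have h' := (inv_lt_inv_of_neg (by norm_num : (-1 : ℝ) < 0) (by linarith)).2 h
    exact ⟨by simpa using h', (inv_lt_zero.2 (by linarith)).le.trans zero_le_one⟩

variable {b : ℕ → ℝ}

lemma one_le_or_lt_neg_one_pivot (h0 : 1 ≤ b 0) {k : ℕ}
    (hb : ∀ i, 0 < i → i ≤ k → 2 ≤ |b i|) : 1 ≤ pivot b k ∨ pivot b k < -1 := by
  induction k with
  | zero => exact Or.inl h0
  | succ k ih =>
    have ht := inv_mem_Ioc_of_one_le_or_lt_neg_one (ih fun i hi hik => hb i hi (by omega))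
    rcases le_abs'.1 (hb (k + 1) k.succ_pos le_rfl) with h | h
    · exact Or.inr (by rw [pivot]; linarith [ht.1])
    · exact Or.inl (by rw [pivot]; linarith [ht.2])

lemma two_le_abs_or_eq_neg_one {n : ℕ} (hmid : ∀ i, 0 < i → i < n - 1 → 2 ≤ |b i|)
    (hlast : 2 ≤ n → 2 ≤ |b (n - 1)| ∨ b (n - 1) = -1) {k : ℕ} (hk0 : 0 < k) (hk : k < n) :
    2 ≤ |b k| ∨ b k = -1 := by
  by_cases h : k < n - 1
  · exact Or.inl (hmid k hk0 h)
  · rw [show k = n - 1 by omega]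
    exact hlast (by omega)

lemma sign_pivot {n : ℕ} (h0 : 1 ≤ b 0) (hmid : ∀ i, 0 < i → i < n - 1 → 2 ≤ |b i|)
    (hlast : 2 ≤ n → 2 ≤ |b (n - 1)| ∨ b (n - 1) = -1) {k : ℕ} (hk : k < n) :
    SignType.sign (pivot b k) = SignType.sign (b k) := by
  cases k with
  | zero => rfl
  | succ k =>
    have ht := inv_mem_Ioc_of_one_le_or_lt_neg_one
      (one_le_or_lt_neg_one_pivot (k := k) h0 fun i hi hik => hmid i hi (by omega))
    rw [pivot]
    rcases two_le_abs_or_eq_neg_one hmid hlast k.succ_pos hk with h | h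
    · rcases le_abs'.1 h with h | h
      · rw [sign_neg (by linarith [ht.1]), sign_neg (by linarith)]
      · rw [sign_pos (by linarith [ht.2]), sign_pos (by linarith)]
    · rw [h, sign_neg (by linarith [ht.1]), sign_neg (by norm_num)]

lemma pivot_ne_zero {n : ℕ} (h0 : 1 ≤ b 0) (hmid : ∀ i, 0 < i → i < n - 1 → 2 ≤ |b i|)
    (hlast : 2 ≤ n → 2 ≤ |b (n - 1)| ∨ b (n - 1) = -1) {k : ℕ} (hk : k < n) :
    pivot b k ≠ 0 := by
  rw [← sign_ne_zero, sign_pivot h0 hmid hlast hk, sign_ne_zero]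
  rcases Nat.eq_zero_or_pos k with rfl | hk0
  · exact (one_pos.trans_le h0).ne'
  · rcases two_le_abs_or_eq_neg_one hmid hlast hk0 hk with h | h
    · exact abs_pos.1 (two_pos.trans_le h)
    · rw [h]
      norm_num

end Pivots

section Tridiagonal

lemma isHermitian_triMat (n : ℕ) (a : ℕ → ℤ) : (triMat n a).IsHermitian := by
  ext i j
  simp only [conjTranspose_apply, star_trivial, triMat, of_apply]
  split_ifs with h <;> first | omega | rw [h] | rfl

lemma sum_range_tridiag_form (a x : ℕ → ℝ) (n : ℕ) (hx : x n = 0) :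
    ∑ k ∈ range n, ∑ l ∈ range n,
        x k * ((if k = l then a k else if k + 1 = l ∨ l + 1 = k then 1 else 0) * x l) =
      ∑ k ∈ range n, (a k * x k ^ 2 + 2 * x k * x (k + 1)) := by
  have hsplit : ∀ k l,
      x k * ((if k = l then a k else if k + 1 = l ∨ l + 1 = k then 1 else 0) * x l) =
        (if k = l then a k * x k ^ 2 else 0) + (if k + 1 = l then x k * x l else 0)
          + (if l + 1 = k then x l * x k else 0) := by
    intro k l
    split_ifs <;> first | omega | (subst_vars; ring)
  have hnext : ∀ k ∈ range n,
      (if k + 1 ∈ range n then x k * x (k + 1) else 0) = x k * x (k + 1) := by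
    intro k hk
    split_ifs with h
    · rfl
    · simp only [mem_range] at hk h
      rw [show k + 1 = n by omega, hx, mul_zero]
  simp_rw [hsplit, sum_add_distrib, sum_ite_eq]
  rw [sum_comm (s := range n) (f := fun k l => if l + 1 = k then x l * x k else 0)]
  simp_rw [sum_ite_eq, sum_ite_mem, inter_self]
  rw [sum_congr rfl hnext, ← sum_add_distrib, ← sum_add_distrib, ← sum_add_distrib]
  exact sum_congr rfl fun k _ => by ring

lemma dotProduct_triMat_mulVec_eq_sum_range (n : ℕ) (a : ℕ → ℤ) (y : Fin n → ℝ) :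
    y ⬝ᵥ triMat n a *ᵥ y = ∑ k ∈ range n,
      (a k * zeroExtend n y k ^ 2 + 2 * zeroExtend n y k * zeroExtend n y (k + 1)) := by
  rw [← sum_range_tridiag_form _ _ n (zeroExtend_of_le y le_rfl), ← Fin.sum_univ_eq_sum_range]
  refine sum_congr rfl fun i _ => ?_
  rw [← Fin.sum_univ_eq_sum_range, mulVec, dotProduct, mul_sum]
  simp [triMat]

lemma dotProduct_triMat_mulVec_eq_sum_pivot (n : ℕ) (a : ℕ → ℤ)
    (hr : ∀ k < n, pivot (fun k => (a k : ℝ)) k ≠ 0) (y : Fin n → ℝ) :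
    y ⬝ᵥ triMat n a *ᵥ y = ∑ i : Fin n, pivot (fun k => (a k : ℝ)) i *
      bidiagMap n (fun k => (pivot (fun k => (a k : ℝ)) k)⁻¹) y i ^ 2 := by
  cases n with
  | zero => simp
  | succ n =>
    have h := sum_range_pivot_mul_sq _ (zeroExtend (n + 1) y) n fun k hk => hr k (by omega)
    rw [zeroExtend_of_le y le_rfl, zero_pow two_ne_zero, zero_div, add_zero] at h
    rw [dotProduct_triMat_mulVec_eq_sum_range, ← h, ← Fin.sum_univ_eq_sum_range]
    simp [bidiagMap]

end Tridiagonal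

lemma card_filter_univ_fin (n : ℕ) (p : ℕ → Prop) [DecidablePred p] :
    #{i : Fin n | p i} = #{k ∈ range n | p k} := by
  simp only [card_filter]
  exact Fin.sum_univ_eq_sum_range (fun k => if p k then 1 else 0) n

lemma card_filter_range_eq_of_sign_eq {n : ℕ} {u v : ℕ → ℝ}
    (h : ∀ k < n, SignType.sign (u k) = SignType.sign (v k)) :
    #{k ∈ range n | 0 < u k} = #{k ∈ range n | 0 < v k} ∧
      #{k ∈ range n | u k < 0} = #{k ∈ range n | v k < 0} := by
  constructor <;> refine congrArg card (filter_congr fun k hk => ?_)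
  · rw [← sign_eq_one_iff, h k (mem_range.1 hk), sign_eq_one_iff]
  · rw [← sign_eq_neg_one_iff, h k (mem_range.1 hk), sign_eq_neg_one_iff]

theorem stmt4_general (n : ℕ) (a : ℕ → ℤ)
    (h1 : 1 ≤ a 0)
    (hmid : ∀ i, 0 < i → i < n - 1 → 2 ≤ |a i|)
    (hlast : 2 ≤ n → (2 ≤ |a (n - 1)| ∨ a (n - 1) = -1)) :
    (triMat n a).det ≠ 0 ∧
    matSig (triMat n a) =
      (((Finset.range n).filter fun i => 0 < a i).card : ℤ) -
      (((Finset.range n).filter fun i => a i < 0).card : ℤ) := by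
  set b : ℕ → ℝ := fun k => a k with hb
  have h0 : 1 ≤ b 0 := show (1 : ℝ) ≤ a 0 by exact_mod_cast h1
  have hmid' : ∀ i, 0 < i → i < n - 1 → 2 ≤ |b i| := fun i hi hin =>
    show (2 : ℝ) ≤ |(a i : ℝ)| by exact_mod_cast hmid i hi hin
  have hlast' : 2 ≤ n → 2 ≤ |b (n - 1)| ∨ b (n - 1) = -1 := fun hn =>
    show (2 : ℝ) ≤ |(a (n - 1) : ℝ)| ∨ (a (n - 1) : ℝ) = -1 by exact_mod_cast hlast hn
  have hr := fun k (hk : k < n) => pivot_ne_zero h0 hmid' hlast' hk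
  obtain ⟨hpos, hneg⟩ := card_filter_range_eq_of_sign_eq fun k (hk : k < n) =>
    sign_pivot h0 hmid' hlast' hk
  simp only [hb, Int.cast_pos, Int.cast_lt_zero] at hpos hneg
  let f := LinearEquiv.ofInjectiveEndo _ (bidiagMap_injective (n := n) fun k => (pivot b k)⁻¹)
  have hform := dotProduct_triMat_mulVec_eq_sum_pivot n a hr
  have hH := isHermitian_triMat n a
  refine ⟨hH.det_ne_zero_of_sum_sq_eq _ f hform fun i => hr i i.2, ?_⟩
  rw [matSig, dif_pos hH, hH.card_pos_eigenvalues_eq _ f hform,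
    hH.card_neg_eigenvalues_eq _ f hform, card_filter_univ_fin n (fun k => 0 < pivot b k),
    card_filter_univ_fin n (fun k => pivot b k < 0), hpos, hneg]

/-- If `a₁ ≥ 1`, `|aᵢ| ≥ 2` for `1 < i < n`, and (when `n ≥ 2`) either
`|aₙ| ≥ 2` or `aₙ = -1`, then the tridiagonal matrix `A(a₁, …, aₙ)` is
nondegenerate and its signature is `#{i : aᵢ > 0} - #{i : aᵢ < 0}`.
(Here the sequence is indexed by `0, …, n-1`, so the paper's `aᵢ` is `a (i-1)`.) -/
theorem stmt4 (n : ℕ) (hn : 1 ≤ n) (a : ℕ → ℤ)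
    (h1 : 1 ≤ a 0)
    (hmid : ∀ i, 0 < i → i < n - 1 → 2 ≤ |a i|)
    (hlast : 2 ≤ n → (2 ≤ |a (n - 1)| ∨ a (n - 1) = -1)) :
    (triMat n a).det ≠ 0 ∧
    matSig (triMat n a) =
      (((Finset.range n).filter fun i => 0 < a i).card : ℤ) -
      (((Finset.range n).filter fun i => a i < 0).card : ℤ) :=
  stmt4_general n a h1 hmid hlast
end
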